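/- The ratio [3 - cosh(2t)]·[sinh(2t) + t·cosh(2t) - 3t] / (16t·sinh²t) is strictly decreasing in t on (0, ∞). -/

import Mathlib

/-!
Since `cosh (2t) = 1 + 2 sinh² t`, the ratio equals `(g t - sinh t cosh t / t - sinh² t + 2) / 4`
with `g t = (sinh t cosh t - t) / (t sinh² t)`. The last two terms are increasing, and
`g' t = -D t / (t² sinh³ t)` with `D t = t sinh t + sinh² t cosh t - 2 t² cosh t`. Finally
`4 D t = cosh 3t - cosh t + 4 t sinh t - 8 t² cosh t` has Taylor coefficients
`(9ⁿ - 32 n² + 24 n - 1) / (2n)!` at `t²ⁿ`, all nonnegative and positive for `n = 3`.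
-/

open Real Set Nat

lemma hasSum_mul_sinh (x : ℝ) :
    HasSum (fun n : ℕ => (2 * n : ℝ) * (x ^ (2 * n) / (2 * n)!)) (x * sinh x) := by
  rw [← hasSum_nat_add_iff' 1, Finset.sum_range_one]
  simp only [CharP.cast_eq_zero, mul_zero, zero_mul, sub_zero]
  refine ((hasSum_sinh x).mul_left x).congr_fun fun n => ?_
  rw [show 2 * (n + 1) = 2 * n + 1 + 1 by ring, factorial_succ]
  push_cast
  field_simp
  ring

lemma hasSum_sq_mul_cosh (x : ℝ) :
    HasSum (fun n : ℕ => (2 * n * (2 * n - 1) : ℝ) * (x ^ (2 * n) / (2 * n)!))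
      (x ^ 2 * cosh x) := by
  rw [← hasSum_nat_add_iff' 1, Finset.sum_range_one]
  simp only [CharP.cast_eq_zero, mul_zero, zero_mul, sub_zero]
  refine ((hasSum_cosh x).mul_left (x ^ 2)).congr_fun fun n => ?_
  rw [show 2 * (n + 1) = 2 * n + 1 + 1 by ring, factorial_succ, factorial_succ]
  push_cast
  field_simp
  ring

lemma mul_sq_add_one_le_nine_pow_add_mul (n : ℕ) : 32 * n ^ 2 + 1 ≤ 9 ^ n + 24 * n := by
  induction n with
  | zero => norm_num
  | succ n ih => rw [pow_succ 9]; nlinarith [Nat.le_self_pow two_ne_zero n]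

lemma two_mul_sq_mul_cosh_lt {x : ℝ} (hx : x ≠ 0) :
    2 * x ^ 2 * cosh x < x * sinh x + sinh x ^ 2 * cosh x := by
  have hseries : HasSum
      (fun n : ℕ => ((9 : ℝ) ^ n - 32 * n ^ 2 + 24 * n - 1) * (x ^ (2 * n) / (2 * n)!))
      (cosh (3 * x) - cosh x + 4 * (x * sinh x) - 8 * (x ^ 2 * cosh x)) :=
    ((((hasSum_cosh (3 * x)).sub (hasSum_cosh x)).add
      ((hasSum_mul_sinh x).mul_left 4)).sub ((hasSum_sq_mul_cosh x).mul_left 8)).congr_fun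
      fun n => by rw [mul_pow, pow_mul 3]; ring
  have hterm_nonneg (n : ℕ) :
      0 ≤ ((9 : ℝ) ^ n - 32 * n ^ 2 + 24 * n - 1) * (x ^ (2 * n) / (2 * n)!) := by
    have hcoeff : (32 * n ^ 2 + 1 : ℝ) ≤ 9 ^ n + 24 * n := by
      exact_mod_cast mul_sq_add_one_le_nine_pow_add_mul n
    rw [pow_mul]
    exact mul_nonneg (by linarith) (by positivity)
  have hpos := hasSum_lt (i := 3) hterm_nonneg (by rw [pow_mul]; norm_num; positivity)
    hasSum_zero hseries
  rw [cosh_three_mul] at hpos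
  rw [sinh_sq]
  linarith

lemma sinh_lt_mul_cosh {x : ℝ} (hx : 0 < x) : sinh x < x * cosh x := by
  refine hasSum_lt (i := 1) (fun n => ?_) ?_ (hasSum_sinh x) ((hasSum_cosh x).mul_left x)
  · rw [pow_succ, mul_comm _ x, mul_div_assoc]
    gcongr
    omega
  · norm_num
    nlinarith [pow_pos hx 3]

lemma strictAntiOn_sinh_mul_cosh_sub_div :
    StrictAntiOn (fun t => (sinh t * cosh t - t) / (t * sinh t ^ 2)) (Ioi 0) := by
  refine strictAntiOn_of_deriv_neg (convex_Ioi 0) ?_ fun t ht => ?_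
  · refine ContinuousOn.div (by fun_prop) (by fun_prop) fun t (ht : 0 < t) => ?_
    have : 0 < sinh t := sinh_pos_iff.2 ht
    positivity
  rw [interior_Ioi, mem_Ioi] at ht
  have hs : 0 < sinh t := sinh_pos_iff.2 ht
  have hN : HasDerivAt (fun t => sinh t * cosh t - t) (2 * sinh t ^ 2) t :=
    ((hasDerivAt_sinh t).fun_mul (hasDerivAt_cosh t)).sub (hasDerivAt_id' t)
      |>.congr_deriv (by linear_combination cosh_sq t)
  have hD : HasDerivAt (fun t => t * sinh t ^ 2) (sinh t ^ 2 + 2 * t * sinh t * cosh t) t := by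
    refine (hasDerivAt_id' t).fun_mul ((hasDerivAt_sinh t).fun_pow 2) |>.congr_deriv ?_
    push_cast
    ring
  rw [(hN.fun_div hD (by positivity)).deriv]
  refine div_neg_of_neg_of_pos ?_ (by positivity)
  have hnum : 2 * sinh t ^ 2 * (t * sinh t ^ 2) -
      (sinh t * cosh t - t) * (sinh t ^ 2 + 2 * t * sinh t * cosh t) =
      -(sinh t * (t * sinh t + sinh t ^ 2 * cosh t - 2 * t ^ 2 * cosh t)) := by
    linear_combination (-2 * t * sinh t ^ 2) * cosh_sq t
  rw [hnum, neg_lt_zero]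
  exact mul_pos hs (by linarith [two_mul_sq_mul_cosh_lt ht.ne'])

lemma strictMonoOn_sinh_mul_cosh_div :
    StrictMonoOn (fun t => sinh t * cosh t / t) (Ioi 0) := by
  refine strictMonoOn_of_deriv_pos (convex_Ioi 0) ?_ fun t ht => ?_
  · exact ContinuousOn.div (by fun_prop) (by fun_prop) fun t ht => ne_of_gt ht
  rw [interior_Ioi, mem_Ioi] at ht
  have hN := (hasDerivAt_sinh t).fun_mul (hasDerivAt_cosh t)
  rw [(hN.fun_div (hasDerivAt_id' t) ht.ne').deriv]
  refine div_pos ?_ (by positivity)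
  rw [mul_one]
  nlinarith [sinh_lt_mul_cosh ht, cosh_pos t, sq_nonneg (sinh t)]

theorem stmt17 :
    StrictAntiOn
      (fun t : ℝ => (3 - Real.cosh (2 * t)) *
        (Real.sinh (2 * t) + t * Real.cosh (2 * t) - 3 * t) /
        (16 * t * Real.sinh t ^ 2))
      (Set.Ioi 0) := by
  have hdecomp : EqOn
      (fun t : ℝ => (3 - cosh (2 * t)) * (sinh (2 * t) + t * cosh (2 * t) - 3 * t) /
        (16 * t * sinh t ^ 2))
      (fun t => ((sinh t * cosh t - t) / (t * sinh t ^ 2) - sinh t * cosh t / t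
        - sinh t ^ 2 + 2) / 4)
      (Ioi 0) := by
    intro t ht
    have hs : sinh t ≠ 0 := sinh_ne_zero.2 (ne_of_gt ht)
    have ht : t ≠ 0 := ne_of_gt ht
    simp only [cosh_two_mul, sinh_two_mul, cosh_sq]
    field_simp
    ring
  refine StrictAntiOn.congr (fun a ha b hb hab => ?_) hdecomp.symm
  have hg := strictAntiOn_sinh_mul_cosh_sub_div ha hb hab
  have hB := strictMonoOn_sinh_mul_cosh_div ha hb hab
  have hsq : sinh a ^ 2 < sinh b ^ 2 :=
    pow_lt_pow_left₀ (sinh_lt_sinh.2 hab) (sinh_pos_iff.2 ha).le two_ne_zero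
  simp only at hg hB ⊢
  linarith
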